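/- Assume the Itô-generator setting. Let μ₀ be a probability Borel measure supported in X₀ and let μ and μ_τ be finite Borel measures supported in [t₀,T] × X such that for every twice continuously differentiable v : ℝ × ℝⁿ → ℝ one has ∫ v dμ_τ = ∫ v(t₀,x) dμ₀(x) + ∫ ℒv dμ. If (γ, v) is dual-feasible, then μ_τ([t₀,T] × X_u) ≤ γ; i.e., any dual-feasible pair upper-bounds the terminal mass placed on the unsafe set. -/

import Mathlib

open MeasureTheory
open scoped ENNReal

/-! The measure `μτ` of the unsafe set is at most `∫ v dμτ`, since `v ≥ 1` there and `v ≥ 0` on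
the support (Markov). By the Dynkin relation this equals `∫ v(t₀,·) dμ₀ + ∫ ℒv dμ`, where the first
term is at most `γ` and the second is nonpositive. -/

/-- The Itô generator of the SDE `dx = f dt + g dW`:
`ℒv(t,x) = ∂ₜ v + f·∇ₓ v + (1/2) gᵀ (∇²ₓₓ v) g`. -/
noncomputable def itoGen {n : ℕ}
    (f g : ℝ × EuclideanSpace ℝ (Fin n) → EuclideanSpace ℝ (Fin n))
    (v : ℝ × EuclideanSpace ℝ (Fin n) → ℝ)
    (p : ℝ × EuclideanSpace ℝ (Fin n)) : ℝ :=
  fderiv ℝ v p (1, f p) + (1 / 2) * iteratedFDeriv ℝ 2 v p ![(0, g p), (0, g p)]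

section

variable {α : Type*} [MeasurableSpace α] {μ : Measure α} {K : Set α}

theorem Continuous.integrable_of_measure_compl_eq_zero [TopologicalSpace α] [T2Space α]
    [OpensMeasurableSpace α] [IsFiniteMeasureOnCompacts μ] (hK : IsCompact K)
    (hμK : μ Kᶜ = 0) {h : α → ℝ} (hh : Continuous h) : Integrable h μ := by
  have hrestrict : μ.restrict K = μ := Measure.restrict_eq_self_of_ae_mem (mem_ae_iff.2 hμK)
  simpa only [IntegrableOn, hrestrict] using hh.continuousOn.integrableOn_compact (μ := μ) hK

theorem measureReal_le_integral_of_one_le [IsFiniteMeasure μ] {S : Set α} {v : α → ℝ}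
    (hv0 : 0 ≤ᵐ[μ] v) (hv : Integrable v μ) (hv1 : ∀ x ∈ S, 1 ≤ v x) :
    μ.real S ≤ ∫ x, v x ∂μ :=
  calc μ.real S ≤ μ.real {x | 1 ≤ v x} := measureReal_mono hv1
    _ = 1 * μ.real {x | 1 ≤ v x} := (one_mul _).symm
    _ ≤ ∫ x, v x ∂μ := mul_meas_ge_le_integral_of_nonneg hv0 hv 1

theorem integral_le_of_ae_le_const [IsProbabilityMeasure μ] {h : α → ℝ} {c : ℝ}
    (hh : Integrable h μ) (hc : h ≤ᵐ[μ] fun _ ↦ c) : ∫ x, h x ∂μ ≤ c := by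
  simpa using integral_mono_ae hh (integrable_const c) hc

end

theorem dual_feasible_bounds_terminal_unsafe_mass_general {n : ℕ}
    {X X₀ Xu : Set (EuclideanSpace ℝ (Fin n))}
    (hX : IsCompact X) (hX₀ : IsCompact X₀)
    {t₀ T : ℝ}
    {f g : ℝ × EuclideanSpace ℝ (Fin n) → EuclideanSpace ℝ (Fin n)}
    (μ₀ : Measure (EuclideanSpace ℝ (Fin n))) [IsProbabilityMeasure μ₀] (hμ₀ : μ₀ X₀ᶜ = 0)
    (μ μτ : Measure (ℝ × EuclideanSpace ℝ (Fin n)))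
    [IsFiniteMeasure μτ]
    (hμ : μ (Set.Icc t₀ T ×ˢ X)ᶜ = 0) (hμτ : μτ (Set.Icc t₀ T ×ˢ X)ᶜ = 0)
    (hLiou : ∀ w : ℝ × EuclideanSpace ℝ (Fin n) → ℝ, ContDiff ℝ 2 w →
      ∫ q, w q ∂μτ = (∫ x, w (t₀, x) ∂μ₀) + ∫ q, itoGen f g w q ∂μ)
    (γ : ℝ) (v : ℝ × EuclideanSpace ℝ (Fin n) → ℝ) (hv : ContDiff ℝ 2 v)
    (hγ : ∀ x ∈ X₀, v (t₀, x) ≤ γ)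
    (hLie : ∀ q ∈ Set.Icc t₀ T ×ˢ X, itoGen f g v q ≤ 0)
    (hv0 : ∀ q ∈ Set.Icc t₀ T ×ˢ X, 0 ≤ v q)
    (hv1 : ∀ q ∈ Set.Icc t₀ T ×ˢ Xu, 1 ≤ v q) :
    (μτ (Set.Icc t₀ T ×ˢ Xu)).toReal ≤ γ := by
  have hK : IsCompact (Set.Icc t₀ T ×ˢ X) := isCompact_Icc.prod hX
  have hv_int : Integrable v μτ := hv.continuous.integrable_of_measure_compl_eq_zero hK hμτ
  have hv₀_int : Integrable (fun x ↦ v (t₀, x)) μ₀ :=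
    (hv.continuous.comp (Continuous.prodMk_right t₀)).integrable_of_measure_compl_eq_zero hX₀ hμ₀
  have hinit : ∫ x, v (t₀, x) ∂μ₀ ≤ γ :=
    integral_le_of_ae_le_const hv₀_int (Filter.mem_of_superset (mem_ae_iff.2 hμ₀) hγ)
  have hdrift : ∫ q, itoGen f g v q ∂μ ≤ 0 :=
    integral_nonpos_of_ae (Filter.mem_of_superset (mem_ae_iff.2 hμ) hLie)
  calc (μτ (Set.Icc t₀ T ×ˢ Xu)).toReal
      ≤ ∫ q, v q ∂μτ :=
        measureReal_le_integral_of_one_le (Filter.mem_of_superset (mem_ae_iff.2 hμτ) hv0) hv_int hv1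
    _ = (∫ x, v (t₀, x) ∂μ₀) + ∫ q, itoGen f g v q ∂μ := hLiou v hv
    _ ≤ γ := by linarith

/-- Any dual-feasible pair `(γ, v)` upper-bounds the terminal mass placed on the unsafe set
by any measure triple `(μ₀, μ, μ_τ)` satisfying the martingale (Liouville/Dynkin) relation. -/
theorem dual_feasible_bounds_terminal_unsafe_mass {n : ℕ} (hn : 1 ≤ n)
    {X X₀ Xu : Set (EuclideanSpace ℝ (Fin n))}
    (hX : IsCompact X) (hX₀ : IsCompact X₀) (hXu : IsCompact Xu)
    (hX₀X : X₀ ⊆ X) (hXuX : Xu ⊆ X)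
    {t₀ T : ℝ} (ht₀ : 0 ≤ t₀) (ht₀T : t₀ < T)
    {f g : ℝ × EuclideanSpace ℝ (Fin n) → EuclideanSpace ℝ (Fin n)}
    (hf : Continuous f) (hg : Continuous g)
    (μ₀ : Measure (EuclideanSpace ℝ (Fin n))) [IsProbabilityMeasure μ₀] (hμ₀ : μ₀ X₀ᶜ = 0)
    (μ μτ : Measure (ℝ × EuclideanSpace ℝ (Fin n)))
    [IsFiniteMeasure μ] [IsFiniteMeasure μτ]
    (hμ : μ (Set.Icc t₀ T ×ˢ X)ᶜ = 0) (hμτ : μτ (Set.Icc t₀ T ×ˢ X)ᶜ = 0)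
    (hLiou : ∀ w : ℝ × EuclideanSpace ℝ (Fin n) → ℝ, ContDiff ℝ 2 w →
      ∫ q, w q ∂μτ = (∫ x, w (t₀, x) ∂μ₀) + ∫ q, itoGen f g w q ∂μ)
    (γ : ℝ) (v : ℝ × EuclideanSpace ℝ (Fin n) → ℝ) (hv : ContDiff ℝ 2 v)
    (hγ : ∀ x ∈ X₀, v (t₀, x) ≤ γ)
    (hLie : ∀ q ∈ Set.Icc t₀ T ×ˢ X, itoGen f g v q ≤ 0)
    (hv0 : ∀ q ∈ Set.Icc t₀ T ×ˢ X, 0 ≤ v q)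
    (hv1 : ∀ q ∈ Set.Icc t₀ T ×ˢ Xu, 1 ≤ v q) :
    (μτ (Set.Icc t₀ T ×ˢ Xu)).toReal ≤ γ :=
  dual_feasible_bounds_terminal_unsafe_mass_general hX hX₀ μ₀ hμ₀ μ μτ hμ hμτ hLiou γ v hv hγ hLie
    hv0 hv1
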